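/- arXiv:1706.03951 — 8 statements merged into one kernel-verified Lean document; each statement's English description precedes it below -/
import Mathlib

section
/- A vector d ∈ ℤ₊ⁿ is the degree sequence of a k-multihypergraph with m edges (an n×m 0-1 matrix with each column having exactly k ones, column sums being edges, row sums being degrees) if and only if ∑ᵢ dᵢ = k·m and dᵢ ≤ m for all i. -/
open Finset

private lemma aux_mod_inj {m a b : ℕ} (ha : a < m) (hb : b < m) {s : ℕ}
    (h : (s + a) % m = (s + b) % m) : a = b := by
  have h2 : a % m = b % m := Nat.ModEq.add_left_cancel' s h
  rwa [Nat.mod_eq_of_lt ha, Nat.mod_eq_of_lt hb] at h2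

private lemma aux_key {m : ℕ} (hm : 0 < m) (s : ℕ) {j : ℕ} (hj : j < m) :
    (s + (m + j - s % m) % m) % m = j := by
  have h0 : s % m < m := Nat.mod_lt _ hm
  have e1 : s % m + (m + j - s % m) ≡ s + (m + j - s % m) % m [MOD m] :=
    Nat.ModEq.add (Nat.mod_modEq s m) ((Nat.mod_modEq _ m).symm)
  have h1 : s % m + (m + j - s % m) = m + j := by omega
  have e2 : (s + (m + j - s % m) % m) % m = (s % m + (m + j - s % m)) % m := e1.symm
  rw [h1] at e2
  rw [e2, Nat.add_mod_left, Nat.mod_eq_of_lt hj]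

private lemma aux_mem {m : ℕ} (hm : 0 < m) (s di : ℕ) (hdm : di ≤ m) {j : ℕ} (hj : j < m) :
    (∃ t, t < di ∧ (s + t) % m = j) ↔ (m + j - s % m) % m < di := by
  have hr : (m + j - s % m) % m < m := Nat.mod_lt _ hm
  constructor
  · rintro ⟨t, ht, hmod⟩
    have : t = (m + j - s % m) % m :=
      aux_mod_inj (lt_of_lt_of_le ht hdm) hr (by rw [hmod, aux_key hm s hj])
    omega
  · intro h
    exact ⟨_, h, aux_key hm s hj⟩

private lemma aux_block (D : ℕ → ℕ) :
    ∀ N t, t < ∑ j ∈ Finset.range N, D j →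
      ∃ i < N, (∑ j ∈ Finset.range i, D j) ≤ t ∧ t < (∑ j ∈ Finset.range i, D j) + D i := by
  intro N
  induction N with
  | zero => simp
  | succ N ih =>
    intro t ht
    by_cases h : t < ∑ j ∈ Finset.range N, D j
    · obtain ⟨i, h1, h2, h3⟩ := ih t h
      exact ⟨i, by omega, h2, h3⟩
    · refine ⟨N, by omega, by omega, ?_⟩
      rw [Finset.sum_range_succ] at ht
      omega

/-- d is the degree sequence of a k-multihypergraph with m edges iff ∑ d = k·m and dᵢ ≤ m. -/
theorem stmt_0 (n m k : ℕ) (hn : 0 < n) (hm : 0 < m) (hk : 0 < k)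
    (d : Fin n → ℕ) :
    (∃ H : Fin m → Finset (Fin n),
      (∀ j, (H j).card = k) ∧
      ∀ i, d i = (Finset.univ.filter (fun j => i ∈ H j)).card) ↔
    ((∑ i, d i) = k * m ∧ ∀ i, d i ≤ m) := by
  constructor
  · rintro ⟨H, hHc, hHd⟩
    constructor
    · have h1 : ∑ i, d i = ∑ i : Fin n, ∑ j : Fin m, if i ∈ H j then 1 else 0 := by
        refine Finset.sum_congr rfl fun i _ => ?_
        rw [hHd i, Finset.card_filter]
      rw [h1, Finset.sum_comm]
      have h2 : ∀ j : Fin m, (∑ i : Fin n, if i ∈ H j then 1 else 0) = k := by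
        intro j
        rw [← Finset.card_filter]
        rw [show Finset.univ.filter (fun i => i ∈ H j) = H j by
          ext i; simp]
        exact hHc j
      rw [Finset.sum_congr rfl fun j _ => h2 j]
      simp [mul_comm]
    · intro i
      rw [hHd i]
      exact (Finset.card_filter_le _ _).trans (by simp)
  · rintro ⟨hsum, hle⟩
    set D : ℕ → ℕ := fun i => if h : i < n then d ⟨i, h⟩ else 0 with hD
    set s : ℕ → ℕ := fun i => ∑ j ∈ Finset.range i, D j with hs
    have hsn : s n = k * m := by
      have h0 : s n = ∑ i : Fin n, d i := by
        show (∑ j ∈ Finset.range n, D j) = ∑ i : Fin n, d i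
        rw [← Fin.sum_univ_eq_sum_range]
        exact Finset.sum_congr rfl fun i _ => by simp [hD, i.isLt]
      rw [h0, hsum]
    have hsucc : ∀ i : Fin n, s (i.val + 1) = s i.val + d i := by
      intro i
      show (∑ j ∈ Finset.range (i.val + 1), D j) = (∑ j ∈ Finset.range i.val, D j) + d i
      rw [Finset.sum_range_succ]
      congr 1
      simp [hD, i.isLt]
    have hmono : ∀ a b : ℕ, a ≤ b → s a ≤ s b := fun a b h =>
      Finset.sum_le_sum_of_subset (Finset.range_subset_range.mpr h)
    set H : Fin m → Finset (Fin n) := fun j =>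
      Finset.univ.filter (fun i => (m + j.val - s i.val % m) % m < d i) with hH
    have hmemH : ∀ (i : Fin n) (j : Fin m),
        i ∈ H j ↔ (∃ t, t < d i ∧ (s i.val + t) % m = j.val) := by
      intro i j
      rw [hH]
      simp only [Finset.mem_filter, Finset.mem_univ, true_and]
      exact (aux_mem hm (s i.val) (d i) (hle i) j.isLt).symm
    refine ⟨H, ?_, ?_⟩
    · intro j
      have hTc : ((Finset.range (k * m)).filter (fun t => t % m = j.val)).card = k := by
        have himg : (Finset.range (k * m)).filter (fun t => t % m = j.val)
            = (Finset.range k).image (fun q => q * m + j.val) := by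
          ext t
          simp only [Finset.mem_filter, Finset.mem_range, Finset.mem_image]
          constructor
          · rintro ⟨ht, hmod⟩
            refine ⟨t / m, (Nat.div_lt_iff_lt_mul hm).mpr ht, ?_⟩
            calc t / m * m + j.val = m * (t / m) + t % m := by rw [hmod, mul_comm]
              _ = t := Nat.div_add_mod t m
          · rintro ⟨q, hq, rfl⟩
            constructor
            · calc q * m + j.val < q * m + m := by omega
                _ = (q + 1) * m := by ring
                _ ≤ k * m := Nat.mul_le_mul_right _ (by omega)
            · rw [add_comm, Nat.add_mul_mod_self_right, Nat.mod_eq_of_lt j.isLt]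
        rw [himg, Finset.card_image_of_injOn
          (fun a _ b _ hab => Nat.eq_of_mul_eq_mul_right hm (by omega)),
          Finset.card_range]
      rw [← hTc]
      have hlt : ∀ a : Fin n, a ∈ H j →
          s a.val + (m + j.val - s a.val % m) % m < s (a.val + 1) := by
        intro a ha
        have hra : (m + j.val - s a.val % m) % m < d a := by
          rw [hH] at ha
          simpa using ha
        have := hsucc a
        omega
      apply Finset.card_bij (fun (i : Fin n) (_ : i ∈ H j) =>
        s i.val + (m + j.val - s i.val % m) % m)
      · intro a ha
        simp only [Finset.mem_filter, Finset.mem_range]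
        constructor
        · have h1 := hlt a ha
          have h2 := hmono (a.val + 1) n a.isLt
          omega
        · exact aux_key hm (s a.val) j.isLt
      · intro a ha b hb heq
        rcases Nat.lt_trichotomy a.val b.val with h | h | h
        · have h1 := hlt a ha
          have h2 := hmono (a.val + 1) b.val h
          have h3 : s b.val ≤ s b.val + (m + j.val - s b.val % m) % m := Nat.le_add_right _ _
          omega
        · exact Fin.ext h
        · have h1 := hlt b hb
          have h2 := hmono (b.val + 1) a.val h
          have h3 : s a.val ≤ s a.val + (m + j.val - s a.val % m) % m := Nat.le_add_right _ _
          omega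
      · intro t ht
        simp only [Finset.mem_filter, Finset.mem_range] at ht
        obtain ⟨htlt, htmod⟩ := ht
        have htn : t < s n := by rw [hsn]; exact htlt
        obtain ⟨i, hiN, h1, h2⟩ := aux_block D n t htn
        have hDi : D i = d ⟨i, hiN⟩ := by simp [hD, hiN]
        have hsi : s i = ∑ j ∈ Finset.range i, D j := rfl
        have ht' : t - s i < d ⟨i, hiN⟩ := by omega
        have hmod' : (s i + (t - s i)) % m = j.val := by
          rw [Nat.add_sub_cancel' h1]; exact htmod
        have hiH : (⟨i, hiN⟩ : Fin n) ∈ H j := by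
          rw [hmemH]
          exact ⟨t - s i, ht', hmod'⟩
        refine ⟨⟨i, hiN⟩, hiH, ?_⟩
        have hreq : (m + j.val - s i % m) % m = t - s i := by
          refine aux_mod_inj (s := s i) (Nat.mod_lt _ hm) (lt_of_lt_of_le ht' (hle _)) ?_
          rw [aux_key hm (s i) j.isLt, hmod']
        show s i + (m + j.val - s i % m) % m = t
        rw [hreq]
        omega
    · intro i
      have himg : Finset.univ.filter (fun j : Fin m => i ∈ H j)
          = (Finset.range (d i)).image
            (fun t => (⟨(s i.val + t) % m, Nat.mod_lt _ hm⟩ : Fin m)) := by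
        ext j
        simp only [Finset.mem_filter, Finset.mem_univ, true_and, Finset.mem_image,
          Finset.mem_range]
        rw [hmemH]
        constructor
        · rintro ⟨t, ht, hmod⟩
          exact ⟨t, ht, Fin.ext hmod⟩
        · rintro ⟨t, ht, rfl⟩
          exact ⟨t, ht, rfl⟩
      rw [himg, Finset.card_image_of_injOn, Finset.card_range]
      intro a ha b hb hab
      simp only [Finset.coe_range, Set.mem_Iio] at ha hb
      exact aux_mod_inj (lt_of_lt_of_le ha (hle i)) (lt_of_lt_of_le hb (hle i))
        (congrArg Fin.val hab)
end

section
/- Let d ∈ ℤ₊ⁿ be sorted nonincreasingly and satisfy ∑ dᵢ = km, dᵢ ≤ m for all i, with m ≥ 1. Define d′ by d′ᵢ = dᵢ − 1 for i ≤ k and d′ᵢ = dᵢ for i > k. Then ∑ d′ᵢ = k(m−1) and d′ᵢ ≤ m−1 for all i. -/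
lemma aux_sum_ite (n t c : ℕ) (h : t ≤ n) :
    (∑ j ∈ Finset.range n, if j < t then c else 0) = t * c := by
  have hfil : (Finset.range n).filter (fun j => j < t) = Finset.range t := by
    ext j; simp; omega
  rw [Finset.sum_ite, Finset.sum_const_zero, hfil, Finset.sum_const]
  simp [Nat.mul_comm]

theorem stmt_2 (n m k : ℕ) (hk : 0 < k) (hkn : k ≤ n) (hm : 0 < m)
    (d : Fin n → ℕ) (hmono : Antitone d)
    (hsum : ∑ i, d i = k * m) (hle : ∀ i, d i ≤ m) :
    (∑ i : Fin n, (if (i : ℕ) < k then d i - 1 else d i)) = k * (m - 1) ∧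
    ∀ i : Fin n, (if (i : ℕ) < k then d i - 1 else d i) ≤ m - 1 := by
  -- entries with index < k are ≥ 1
  have hpos : ∀ i : Fin n, (i : ℕ) < k → 1 ≤ d i := by
    intro i hi
    by_contra h
    push_neg at h
    have hd0 : d i = 0 := by omega
    have hbound : ∑ j, d j ≤ ∑ j : Fin n, (if (j : ℕ) < (i : ℕ) then m else 0) := by
      apply Finset.sum_le_sum
      intro j _
      by_cases hj : (j : ℕ) < (i : ℕ)
      · simpa [hj] using hle j
      · have hij : i ≤ j := by
          rw [Fin.le_def]; omega
        have := hmono hij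
        simp only [hj, if_false]
        omega
    have hrhs : ∑ j : Fin n, (if (j : ℕ) < (i : ℕ) then m else 0) = (i : ℕ) * m := by
      rw [Fin.sum_univ_eq_sum_range (fun j => if j < (i : ℕ) then m else 0)]
      exact aux_sum_ite n (i : ℕ) m (le_of_lt i.isLt)
    rw [hsum, hrhs] at hbound
    have : (i : ℕ) * m < k * m := (Nat.mul_lt_mul_right hm).mpr hi
    omega
  -- entries with index ≥ k are < m
  have hlt : ∀ i : Fin n, k ≤ (i : ℕ) → d i < m := by
    intro i hi
    by_contra h
    push_neg at h
    have hdm : ∀ j : Fin n, (j : ℕ) ≤ (i : ℕ) → d j = m := by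
      intro j hj
      have hji : j ≤ i := by rw [Fin.le_def]; omega
      have := hmono hji
      have := hle j
      omega
    have hbound : (∑ j : Fin n, (if (j : ℕ) < (i : ℕ) + 1 then m else 0)) ≤ ∑ j, d j := by
      apply Finset.sum_le_sum
      intro j _
      by_cases hj : (j : ℕ) < (i : ℕ) + 1
      · simp only [hj, if_true]
        exact (hdm j (by omega)).ge
      · simp [hj]
    have hrhs : ∑ j : Fin n, (if (j : ℕ) < (i : ℕ) + 1 then m else 0) = ((i : ℕ) + 1) * m := by
      rw [Fin.sum_univ_eq_sum_range (fun j => if j < (i : ℕ) + 1 then m else 0)]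
      exact aux_sum_ite n ((i : ℕ) + 1) m i.isLt
    rw [hsum, hrhs] at hbound
    have : k * m < ((i : ℕ) + 1) * m := (Nat.mul_lt_mul_right hm).mpr (by omega)
    omega
  constructor
  · have hsplit : (∑ i : Fin n, (if (i : ℕ) < k then d i - 1 else d i)) +
        (∑ i : Fin n, (if (i : ℕ) < k then 1 else 0)) = ∑ i, d i := by
      rw [← Finset.sum_add_distrib]
      apply Finset.sum_congr rfl
      intro i _
      by_cases hi : (i : ℕ) < k
      · have := hpos i hi
        simp only [hi, if_true]
        omega
      · simp [hi]
    have hones : (∑ i : Fin n, (if (i : ℕ) < k then 1 else 0)) = k := by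
      rw [Fin.sum_univ_eq_sum_range (fun j => if j < k then 1 else 0)]
      rw [aux_sum_ite n k 1 hkn]
      omega
    have hkm : k * m = k * (m - 1) + k := by
      rw [← Nat.mul_succ]
      congr 1
      omega
    rw [hones, hsum, hkm] at hsplit
    omega
  · intro i
    by_cases hi : (i : ℕ) < k
    · have := hle i
      simp only [hi, if_true]
      omega
    · have := hlt i (by omega)
      simp only [hi, if_false]
      omega
end

section
/- Let w ∈ ℤⁿ with w·𝟙 = 0, where 𝟙 is the all-ones vector. Let S₊ = {x ∈ {0,1}ⁿ : ‖x‖₁ = 3, w·x > 0}, S₀ = {x : ‖x‖₁ = 3, w·x = 0}, and d = 𝟙 + ∑_{x ∈ S₊} x. Then there exists a set G ⊆ {x ∈ {0,1}ⁿ : ‖x‖₁ = 3} with ∑_{x ∈ G} x = d if and only if there exists H ⊆ S₀ with ∑_{x ∈ H} x = 𝟙. -/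
/-- Degree of vertex `i` in the (hyper)graph `G`, given as a set of edges. -/
def degSeq {V : Type*} [DecidableEq V] (G : Finset (Finset V)) (i : V) : ℕ :=
  (G.filter (fun e => i ∈ e)).card

lemma degSeq_union {V : Type*} [DecidableEq V] {A B : Finset (Finset V)}
    (h : Disjoint A B) (i : V) : degSeq (A ∪ B) i = degSeq A i + degSeq B i := by
  unfold degSeq
  rw [Finset.filter_union, Finset.card_union_of_disjoint
    (Finset.disjoint_filter_filter h)]

lemma sum_sigma_eq {n : ℕ} (w : Fin n → ℤ) (G : Finset (Finset (Fin n))) :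
    ∑ e ∈ G, ∑ j ∈ e, w j = ∑ i, (degSeq G i : ℤ) * w i := by
  have h1 : ∀ e : Finset (Fin n), ∑ j ∈ e, w j = ∑ i, if i ∈ e then w i else 0 := by
    intro e
    rw [Finset.sum_ite_mem, Finset.univ_inter]
  calc ∑ e ∈ G, ∑ j ∈ e, w j = ∑ e ∈ G, ∑ i, if i ∈ e then w i else 0 := by
        simp_rw [h1]
    _ = ∑ i, ∑ e ∈ G, if i ∈ e then w i else 0 := Finset.sum_comm
    _ = ∑ i, (degSeq G i : ℤ) * w i := by
        refine Finset.sum_congr rfl fun i _ => ?_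
        rw [← Finset.sum_filter, Finset.sum_const, degSeq, nsmul_eq_mul]

theorem stmt_6 (n : ℕ) (w : Fin n → ℤ) (hw : ∑ i, w i = 0)
    (d : Fin n → ℕ)
    (hd : ∀ i, d i = 1 +
      degSeq (Finset.univ.filter (fun e : Finset (Fin n) => e.card = 3 ∧ 0 < ∑ j ∈ e, w j)) i) :
    (∃ G : Finset (Finset (Fin n)), (∀ e ∈ G, e.card = 3) ∧ ∀ i, degSeq G i = d i) ↔
    (∃ H : Finset (Finset (Fin n)), (∀ e ∈ H, e.card = 3 ∧ (∑ j ∈ e, w j) = 0) ∧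
      ∀ i, degSeq H i = 1) := by
  set S : Finset (Finset (Fin n)) :=
    Finset.univ.filter (fun e : Finset (Fin n) => e.card = 3 ∧ 0 < ∑ j ∈ e, w j) with hS
  constructor
  · rintro ⟨G, hG3, hGd⟩
    -- the key counting identity
    have hkey : ∑ e ∈ G, ∑ j ∈ e, w j = ∑ e ∈ S, ∑ j ∈ e, w j := by
      rw [sum_sigma_eq, sum_sigma_eq]
      calc ∑ i, (degSeq G i : ℤ) * w i = ∑ i, ((1 : ℤ) + degSeq S i) * w i := by
            refine Finset.sum_congr rfl fun i _ => ?_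
            rw [hGd i, hd i]; push_cast; ring
        _ = ∑ i, w i + ∑ i, (degSeq S i : ℤ) * w i := by
            rw [← Finset.sum_add_distrib]
            refine Finset.sum_congr rfl fun i _ => ?_; ring
        _ = ∑ i, (degSeq S i : ℤ) * w i := by rw [hw, zero_add]
    -- split G
    have hGpos : G.filter (fun e => 0 < ∑ j ∈ e, w j) = S ∩ G := by
      ext e
      simp only [Finset.mem_filter, Finset.mem_inter, hS, Finset.mem_univ, true_and]
      constructor
      · rintro ⟨he, hp⟩; exact ⟨⟨hG3 e he, hp⟩, he⟩
      · rintro ⟨⟨_, hp⟩, he⟩; exact ⟨he, hp⟩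
    have hsplitG : ∑ e ∈ G, ∑ j ∈ e, w j =
        ∑ e ∈ S ∩ G, ∑ j ∈ e, w j + ∑ e ∈ G.filter (fun e => ¬ 0 < ∑ j ∈ e, w j), ∑ j ∈ e, w j := by
      rw [← hGpos, Finset.sum_filter_add_sum_filter_not]
    have hsplitS : ∑ e ∈ S, ∑ j ∈ e, w j =
        ∑ e ∈ S ∩ G, ∑ j ∈ e, w j + ∑ e ∈ S \ G, ∑ j ∈ e, w j := by
      exact (Finset.sum_inter_add_sum_sdiff S G _).symm
    have heq : ∑ e ∈ G.filter (fun e => ¬ 0 < ∑ j ∈ e, w j), ∑ j ∈ e, w j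
        = ∑ e ∈ S \ G, ∑ j ∈ e, w j := by
      have := hkey
      rw [hsplitG, hsplitS] at this
      linarith
    have hL : ∑ e ∈ G.filter (fun e => ¬ 0 < ∑ j ∈ e, w j), ∑ j ∈ e, w j ≤ 0 :=
      Finset.sum_nonpos fun e he => by
        have := (Finset.mem_filter.mp he).2; linarith
    have hR : 0 ≤ ∑ e ∈ S \ G, ∑ j ∈ e, w j :=
      Finset.sum_nonneg fun e he => by
        have := (Finset.mem_filter.mp (Finset.mem_sdiff.mp he).1).2.2
        exact le_of_lt this
    have hL0 : ∑ e ∈ G.filter (fun e => ¬ 0 < ∑ j ∈ e, w j), ∑ j ∈ e, w j = 0 := le_antisymm hL (heq ▸ hR)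
    have hR0 : ∑ e ∈ S \ G, ∑ j ∈ e, w j = 0 := by rw [← heq]; exact hL0
    -- S ⊆ G
    have hSsubG : S ⊆ G := by
      intro e he
      by_contra hne
      have hmem : e ∈ S \ G := Finset.mem_sdiff.mpr ⟨he, hne⟩
      have hpos : 0 < ∑ j ∈ e, w j := (Finset.mem_filter.mp he).2.2
      have : 0 < ∑ e ∈ S \ G, ∑ j ∈ e, w j :=
        Finset.sum_pos' (fun f hf => le_of_lt (Finset.mem_filter.mp (Finset.mem_sdiff.mp hf).1).2.2)
          ⟨e, hmem, hpos⟩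
      omega
    -- each non-positive edge has sum 0
    have hzero : ∀ e ∈ G.filter (fun e => ¬ 0 < ∑ j ∈ e, w j), ∑ j ∈ e, w j = 0 := by
      intro e he
      have := Finset.sum_eq_zero_iff_of_nonpos (fun f hf => by
        have := (Finset.mem_filter.mp hf).2; linarith) |>.mp hL0
      exact this e he
    refine ⟨G.filter (fun e => ¬ 0 < ∑ j ∈ e, w j), fun e he => ⟨hG3 e (Finset.mem_filter.mp he).1, hzero e he⟩, ?_⟩
    intro i
    have hdeg : degSeq (G.filter (fun e => 0 < ∑ j ∈ e, w j)) i +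
        degSeq (G.filter (fun e => ¬ 0 < ∑ j ∈ e, w j)) i = degSeq G i := by
      unfold degSeq
      rw [Finset.filter_comm, Finset.filter_comm (fun e => ¬ 0 < ∑ j ∈ e, w j)]
      exact Finset.card_filter_add_card_filter_not _
    have hSG : S ∩ G = S := Finset.inter_eq_left.mpr hSsubG
    rw [hGpos, hSG] at hdeg
    have := hGd i
    rw [hd i] at this
    omega
  · rintro ⟨H, hH, hHd⟩
    have hdisj : Disjoint H S := by
      rw [Finset.disjoint_left]
      intro e heH heS
      have := (hH e heH).2
      have := (Finset.mem_filter.mp heS).2.2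
      omega
    refine ⟨H ∪ S, fun e he => ?_, fun i => ?_⟩
    · rcases Finset.mem_union.mp he with h | h
      · exact (hH e h).1
      · exact (Finset.mem_filter.mp h).2.1
    · rw [degSeq_union hdisj, hHd i, hd i]
end

section
/- Let w ∈ ℤⁿ with w·𝟙 = 0, let S₊, S₋, S₀ be the sets of x ∈ {0,1}ⁿ with exactly 3 ones and w·x positive, negative, zero respectively, and let d = 𝟙 + ∑_{x∈S₊} x. If G is any 3-hypergraph (set of such 0-1 vectors) with ∑_{x∈G} x = d, then G ∩ S₋ = ∅ and S₊ ⊆ G. -/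
lemma degSeq_sum (n : ℕ) (w : Fin n → ℤ) (H : Finset (Finset (Fin n))) :
    ∑ e ∈ H, ∑ j ∈ e, w j = ∑ i, (degSeq H i : ℤ) * w i := by
  have : ∀ e ∈ H, ∑ j ∈ e, w j = ∑ i, if i ∈ e then w i else 0 := by
    intro e _
    rw [Finset.sum_ite_mem, Finset.univ_inter]
  rw [Finset.sum_congr rfl this, Finset.sum_comm]
  refine Finset.sum_congr rfl fun i _ => ?_
  rw [Finset.sum_ite, Finset.sum_const, Finset.sum_const_zero, add_zero, degSeq, nsmul_eq_mul]

theorem stmt_7 (n : ℕ) (w : Fin n → ℤ) (hw : ∑ i, w i = 0)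
    (d : Fin n → ℕ)
    (hd : ∀ i, d i = 1 +
      degSeq (Finset.univ.filter (fun e : Finset (Fin n) => e.card = 3 ∧ 0 < ∑ j ∈ e, w j)) i)
    (G : Finset (Finset (Fin n))) (hG : ∀ e ∈ G, e.card = 3)
    (hGdeg : ∀ i, degSeq G i = d i) :
    (∀ e ∈ G, ¬ (∑ j ∈ e, w j) < 0) ∧
    (∀ e : Finset (Fin n), e.card = 3 → 0 < ∑ j ∈ e, w j → e ∈ G) := by
  classical
  set S : Finset (Finset (Fin n)) :=
    Finset.univ.filter (fun e : Finset (Fin n) => e.card = 3 ∧ 0 < ∑ j ∈ e, w j) with hS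
  have key : ∑ e ∈ G, ∑ j ∈ e, w j = ∑ e ∈ S, ∑ j ∈ e, w j := by
    rw [degSeq_sum n w G, degSeq_sum n w S]
    have : ∀ i ∈ Finset.univ, (degSeq G i : ℤ) * w i = w i + (degSeq S i : ℤ) * w i := by
      intro i _
      rw [hGdeg i, hd i]
      push_cast
      ring
    rw [Finset.sum_congr rfl this, Finset.sum_add_distrib, hw, zero_add]
  -- split
  have hsplitG : ∑ e ∈ G, ∑ j ∈ e, w j
      = ∑ e ∈ G ∩ S, ∑ j ∈ e, w j + ∑ e ∈ G \ S, ∑ j ∈ e, w j := by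
    rw [← Finset.sum_inter_add_sum_sdiff]
  have hsplitS : ∑ e ∈ S, ∑ j ∈ e, w j
      = ∑ e ∈ G ∩ S, ∑ j ∈ e, w j + ∑ e ∈ S \ G, ∑ j ∈ e, w j := by
    rw [Finset.inter_comm, ← Finset.sum_inter_add_sum_sdiff]
  have heq : ∑ e ∈ G \ S, ∑ j ∈ e, w j = ∑ e ∈ S \ G, ∑ j ∈ e, w j := by
    have := key
    rw [hsplitG, hsplitS] at this
    linarith
  have hGS : ∀ e ∈ G \ S, ∑ j ∈ e, w j ≤ 0 := by
    intro e he
    rw [Finset.mem_sdiff, hS, Finset.mem_filter] at he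
    by_contra h
    push_neg at h
    exact he.2 ⟨Finset.mem_univ e, hG e he.1, h⟩
  have hSG : ∀ e ∈ S \ G, 0 < ∑ j ∈ e, w j := by
    intro e he
    rw [Finset.mem_sdiff, hS, Finset.mem_filter] at he
    exact he.1.2.2
  have hle : ∑ e ∈ G \ S, ∑ j ∈ e, w j ≤ 0 := Finset.sum_nonpos hGS
  have hge : 0 ≤ ∑ e ∈ S \ G, ∑ j ∈ e, w j :=
    Finset.sum_nonneg fun e he => le_of_lt (hSG e he)
  have hzero1 : ∑ e ∈ G \ S, ∑ j ∈ e, w j = 0 := le_antisymm hle (heq ▸ hge)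
  have hzero2 : ∑ e ∈ S \ G, ∑ j ∈ e, w j = 0 := heq ▸ hzero1
  have hSsubG : S \ G = ∅ := by
    by_contra h
    obtain ⟨e, he⟩ := Finset.nonempty_iff_ne_empty.mpr h
    have := Finset.sum_lt_sum_of_nonempty ⟨e, he⟩ hSG
    simp at this
    omega
  constructor
  · intro e heG hneg
    have heGS : e ∈ G \ S := by
      rw [Finset.mem_sdiff, hS, Finset.mem_filter]
      exact ⟨heG, fun h => absurd h.2.2 (by linarith)⟩
    have := (Finset.sum_eq_zero_iff_of_nonpos hGS).mp hzero1 e heGS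
    omega
  · intro e hcard hpos
    by_contra h
    have : e ∈ S \ G := by
      rw [Finset.mem_sdiff, hS, Finset.mem_filter]
      exact ⟨⟨Finset.mem_univ e, hcard, hpos⟩, h⟩
    rw [hSsubG] at this
    exact absurd this (Finset.notMem_empty e)
end

section
/- Fix k ≥ 3. Let d = (d₁,...,dₙ) ∈ ℤ₊ⁿ with ∑ dᵢ divisible by 3, set m = (∑ dᵢ)/3, and define d′ ∈ ℤ₊^{n+k−3} by d′ᵢ = dᵢ for i ≤ n and d′ᵢ = m for n < i ≤ n+k−3. Then d is the degree sequence of a 3-hypergraph on [n] if and only if d′ is the degree sequence of a k-hypergraph on [n+k−3]. -/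
lemma sum_degSeq {V : Type*} [Fintype V] [DecidableEq V] (G : Finset (Finset V)) :
    ∑ i, degSeq G i = ∑ e ∈ G, e.card := by
  simp only [degSeq, Finset.card_filter]
  rw [Finset.sum_comm]
  refine Finset.sum_congr rfl fun e _ => ?_
  rw [Finset.sum_ite_mem, Finset.univ_inter, Finset.card_eq_sum_ones]

theorem stmt_8 (n k : ℕ) (hk : 3 ≤ k) (d : Fin n → ℕ) (m : ℕ)
    (hm : ∑ i, d i = 3 * m) :
    (∃ H : Finset (Finset (Fin n)), (∀ e ∈ H, e.card = 3) ∧ ∀ i, degSeq H i = d i) ↔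
    (∃ H : Finset (Finset (Fin (n + (k - 3)))), (∀ e ∈ H, e.card = k) ∧
      ∀ i : Fin (n + (k - 3)),
        degSeq H i = if h : (i : ℕ) < n then d ⟨i, h⟩ else m) := by
  set kt := k - 3 with hkt
  set emb : Fin n ↪ Fin (n + kt) := Fin.castAddEmb kt with hemb
  have hembval : ∀ i : Fin n, ((emb i : Fin (n + kt)) : ℕ) = (i : ℕ) := fun i => rfl
  set T : Finset (Fin (n + kt)) := Finset.univ.filter (fun j : Fin (n + kt) => ¬ (j : ℕ) < n)
    with hT
  have hmemT : ∀ j : Fin (n + kt), j ∈ T ↔ ¬ (j : ℕ) < n := by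
    intro j; simp [hT]
  have hhead : Finset.univ.filter (fun j : Fin (n + kt) => (j : ℕ) < n)
      = Finset.univ.map emb := by
    ext j
    simp only [Finset.mem_filter, Finset.mem_univ, true_and]
    constructor
    · intro h
      rw [Finset.mem_map]
      exact ⟨⟨j, h⟩, Finset.mem_univ _, Fin.ext rfl⟩
    · intro h
      rw [Finset.mem_map] at h
      obtain ⟨i, -, rfl⟩ := h
      exact i.2
  have hTcard : T.card = kt := by
    have h2 : T = Finset.univ \ Finset.univ.map emb := by
      rw [← hhead, hT]
      ext j; simp
    rw [h2, Finset.card_sdiff_of_subset (Finset.subset_univ _)]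
    simp
  constructor
  · rintro ⟨H, hc, hd⟩
    have hHcard : H.card = m := by
      have h1 : ∑ e ∈ H, e.card = 3 * H.card := by
        rw [Finset.sum_congr rfl hc]; simp [mul_comm]
      have h2 := sum_degSeq H
      rw [Finset.sum_congr rfl (fun i _ => hd i), hm] at h2
      omega
    set f : Finset (Fin n) → Finset (Fin (n + kt)) := fun e => e.map emb ∪ T with hf
    have hmemf : ∀ (e : Finset (Fin n)) (i : Fin n), emb i ∈ f e ↔ i ∈ e := by
      intro e i
      simp only [hf, Finset.mem_union, Finset.mem_map', hmemT, hembval]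
      simp [i.2]
    have hfinj : Function.Injective f := by
      intro e1 e2 h
      ext i
      rw [← hmemf e1 i, h, hmemf]
    have hdisj : ∀ e : Finset (Fin n), Disjoint (e.map emb) T := by
      intro e
      rw [Finset.disjoint_left]
      intro j hj hjT
      obtain ⟨i, -, rfl⟩ := Finset.mem_map.mp hj
      exact (hmemT _).mp hjT (by rw [hembval]; exact i.2)
    refine ⟨H.image f, ?_, ?_⟩
    · intro e' he'
      obtain ⟨e, he, rfl⟩ := Finset.mem_image.mp he'
      rw [hf, Finset.card_union_of_disjoint (hdisj e), Finset.card_map, hc e he, hTcard]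
      omega
    · intro i
      have key : degSeq (H.image f) i = (H.filter (fun e => i ∈ f e)).card := by
        rw [degSeq, Finset.filter_image]
        exact Finset.card_image_of_injOn (hfinj.injOn)
      by_cases h : (i : ℕ) < n
      · rw [key]
        have hfc : H.filter (fun e => i ∈ f e)
            = H.filter (fun e => (⟨(i : ℕ), h⟩ : Fin n) ∈ e) := by
          apply Finset.filter_congr
          intro e _
          rw [← hmemf e ⟨(i : ℕ), h⟩, show emb ⟨(i : ℕ), h⟩ = i from Fin.ext rfl]
        rw [hfc, dif_pos h]
        exact hd ⟨(i : ℕ), h⟩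
      · rw [key, dif_neg h]
        have hfc : H.filter (fun e => i ∈ f e) = H :=
          Finset.filter_eq_self.mpr
            (fun e _ => Finset.mem_union_right _ ((hmemT i).mpr h))
        rw [hfc, hHcard]
  · rintro ⟨H', hc, hd⟩
    have hsum : ∑ j : Fin (n + kt), (if h : (j : ℕ) < n then d ⟨j, h⟩ else m) = k * m := by
      rw [Fin.sum_univ_add]
      have h1 : ∀ i : Fin n, (if h : ((Fin.castAdd kt i : Fin (n + kt)) : ℕ) < n
          then d ⟨_, h⟩ else m) = d i := by
        intro i
        rw [dif_pos (show ((Fin.castAdd kt i : Fin (n + kt)) : ℕ) < n from i.2)]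
        exact congrArg d (Fin.ext rfl)
      have h2 : ∀ t : Fin kt, (if h : ((Fin.natAdd n t : Fin (n + kt)) : ℕ) < n
          then d ⟨_, h⟩ else m) = m := by
        intro t
        rw [dif_neg (by simp)]
      rw [Finset.sum_congr rfl (fun i _ => h1 i), Finset.sum_congr rfl (fun t _ => h2 t), hm]
      simp only [Finset.sum_const, Finset.card_univ, Fintype.card_fin, smul_eq_mul]
      rw [← Nat.add_mul]
      congr 1
      omega
    have hH'card : H'.card = m := by
      have h2 := sum_degSeq H'
      rw [Finset.sum_congr rfl (fun i _ => hd i), hsum, Finset.sum_congr rfl hc] at h2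
      simp only [Finset.sum_const, smul_eq_mul] at h2
      have hk0 : 0 < k := by omega
      exact Nat.eq_of_mul_eq_mul_right hk0 (h2.symm.trans (mul_comm k m))
    have htail : ∀ e ∈ H', ∀ j : Fin (n + kt), ¬ (j : ℕ) < n → j ∈ e := by
      intro e he j hj
      have h1 : degSeq H' j = m := by rw [hd j, dif_neg hj]
      have h2 : H'.filter (fun e => j ∈ e) = H' :=
        Finset.eq_of_subset_of_card_le (Finset.filter_subset _ _)
          (h1.trans hH'card.symm).ge
      have := h2 ▸ he
      exact (Finset.mem_filter.mp this).2
    set g : Finset (Fin (n + kt)) → Finset (Fin n) :=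
      fun e => Finset.univ.filter (fun i => emb i ∈ e) with hg
    have hmemg : ∀ (e : Finset (Fin (n + kt))) (i : Fin n), i ∈ g e ↔ emb i ∈ e := by
      intro e i; simp [hg]
    have hginj : Set.InjOn g ↑H' := by
      intro e1 he1 e2 he2 h
      ext j
      by_cases hj : (j : ℕ) < n
      · have hje : j = emb ⟨(j : ℕ), hj⟩ := Fin.ext rfl
        rw [hje, ← hmemg, h, hmemg]
      · exact ⟨fun _ => htail e2 he2 j hj, fun _ => htail e1 he1 j hj⟩
    have hgcard : ∀ e ∈ H', (g e).card = 3 := by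
      intro e he
      have hfilt : e.filter (fun j : Fin (n + kt) => (j : ℕ) < n) = (g e).map emb := by
        ext j
        simp only [Finset.mem_filter, Finset.mem_map]
        constructor
        · rintro ⟨hje, hjn⟩
          exact ⟨⟨(j : ℕ), hjn⟩, (hmemg e ⟨(j : ℕ), hjn⟩).mpr
            (by rwa [show emb ⟨(j : ℕ), hjn⟩ = j from Fin.ext rfl]), Fin.ext rfl⟩
        · rintro ⟨i, hi, rfl⟩
          exact ⟨(hmemg e i).mp hi, by rw [hembval]; exact i.2⟩
      have hfilt2 : e.filter (fun j : Fin (n + kt) => ¬ (j : ℕ) < n) = T := by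
        ext j
        simp only [Finset.mem_filter, hmemT j, hT, Finset.mem_univ, true_and]
        exact ⟨fun h => h.2, fun h => ⟨htail e he j h, h⟩⟩
      have := Finset.card_filter_add_card_filter_not
        (s := e) (fun j : Fin (n + kt) => (j : ℕ) < n)
      rw [hfilt, hfilt2, Finset.card_map, hTcard, hc e he] at this
      omega
    refine ⟨H'.image g, ?_, ?_⟩
    · intro e he
      obtain ⟨e', he', rfl⟩ := Finset.mem_image.mp he
      exact hgcard e' he'
    · intro i
      have key : degSeq (H'.image g) i = (H'.filter (fun e => i ∈ g e)).card := by
        rw [degSeq, Finset.filter_image]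
        exact Finset.card_image_of_injOn
          (hginj.mono (by exact_mod_cast Finset.filter_subset _ _))
      have hfc : H'.filter (fun e => i ∈ g e) = H'.filter (fun e => emb i ∈ e) := by
        apply Finset.filter_congr
        intro e _
        simp [hmemg]
      have h2 : degSeq H' (emb i) = d i := by
        rw [hd (emb i), dif_pos (show ((emb i : Fin (n + kt)) : ℕ) < n from i.2)]
        exact congrArg d (Fin.ext rfl)
      rw [key, hfc]
      exact h2
end

section
/- Let f : ℝⁿ → ℝ be convex and let k, m, n be positive integers with k ≤ n. Then max over k-multihypergraphs H with m edges of f(∑ⱼ Hʲ) is attained by a multihypergraph consisting of m copies of a single edge x ∈ {0,1}ⁿ with exactly k ones; moreover this optimal value equals max over x ∈ {0,1}ⁿ_k of f(m·x). -/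
/-!
The degree sequence `∑ⱼ Hʲ` is the barycentre of the points `m • Hʲ`. By the maximum principle
for convex functions, `f` at a barycentre is at most `f` at one of the points, i.e. at the degree
sequence of `m` copies of the edge `Hʲ`; and among the finitely many `k`-sets some `x` maximises
`f (m • x)`.
-/

open Finset

section MaximumPrinciple

variable {𝕜 E β ι : Type*} [Field 𝕜] [LinearOrder 𝕜] [IsStrictOrderedRing 𝕜] [AddCommGroup E]
  [AddCommGroup β] [LinearOrder β] [IsOrderedAddMonoid β] [Module 𝕜 E]
  [Module 𝕜 β] [IsStrictOrderedModule 𝕜 β] {s : Set E} {f : E → β}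

theorem Finset.sum_eq_centerMass_card_smul (t : Finset ι) (ht : t.Nonempty) (v : ι → E) :
    ∑ i ∈ t, v i = t.centerMass (fun _ ↦ (1 : 𝕜)) (fun i ↦ (#t : 𝕜) • v i) := by
  have hcard : (#t : 𝕜) ≠ 0 := Nat.cast_ne_zero.2 ht.card_pos.ne'
  simp only [centerMass, sum_const, nsmul_eq_mul, mul_one, one_smul, ← smul_sum,
    inv_smul_smul₀ hcard]

theorem ConvexOn.exists_map_sum_le_map_card_smul (hf : ConvexOn 𝕜 s f) {t : Finset ι}
    (ht : t.Nonempty) {v : ι → E} (hv : ∀ i ∈ t, (#t : 𝕜) • v i ∈ s) :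
    ∃ i ∈ t, f (∑ j ∈ t, v j) ≤ f ((#t : 𝕜) • v i) := by
  rw [t.sum_eq_centerMass_card_smul (𝕜 := 𝕜) ht]
  exact hf.exists_ge_of_centerMass (fun _ _ ↦ zero_le_one) (by simpa using ht.card_pos) hv

end MaximumPrinciple

theorem Finset.exists_card_eq_forall_card_eq_le {α β : Type*} [Fintype α] [LinearOrder β]
    (g : Finset α → β) {k : ℕ} (hk : k ≤ Fintype.card α) :
    ∃ x : Finset α, #x = k ∧ ∀ y : Finset α, #y = k → g y ≤ g x := by
  have hne : (powersetCard k (univ : Finset α)).Nonempty := powersetCard_nonempty.2 (by simpa)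
  obtain ⟨x, hx, hmax⟩ := exists_max_image _ g hne
  exact ⟨x, (mem_powersetCard.1 hx).2, fun y hy ↦ hmax y (mem_powersetCard.2 ⟨subset_univ y, hy⟩)⟩

theorem stmt_12_general (n k m : ℕ) (hkn : k ≤ n) (hm : 0 < m)
    (f : (Fin n → ℝ) → ℝ) (hf : ConvexOn ℝ Set.univ f) :
    ∃ x : Finset (Fin n), x.card = k ∧
      (∀ H : Fin m → Finset (Fin n), (∀ j, (H j).card = k) →
        f (fun i => ∑ j, if i ∈ H j then (1 : ℝ) else 0) ≤
          f (fun i => if i ∈ x then (m : ℝ) else 0)) ∧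
      ∀ y : Finset (Fin n), y.card = k →
        f (fun i => if i ∈ y then (m : ℝ) else 0) ≤
          f (fun i => if i ∈ x then (m : ℝ) else 0) := by
  obtain ⟨x, hx, hmax⟩ := exists_card_eq_forall_card_eq_le
    (fun y : Finset (Fin n) ↦ f (fun i ↦ if i ∈ y then (m : ℝ) else 0)) (by simpa using hkn)
  refine ⟨x, hx, fun H hH ↦ ?_, hmax⟩
  have hscale : ∀ j, (m : ℝ) • (fun i ↦ if i ∈ H j then (1 : ℝ) else 0) =
      fun i ↦ if i ∈ H j then (m : ℝ) else 0 := fun j ↦ by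
    ext i; simp
  obtain ⟨j, -, hj⟩ := hf.exists_map_sum_le_map_card_smul (t := univ)
    (v := fun j i ↦ if i ∈ H j then (1 : ℝ) else 0) ⟨⟨0, hm⟩, mem_univ _⟩
    (fun _ _ ↦ Set.mem_univ _)
  rw [sum_fn, card_univ, Fintype.card_fin, hscale] at hj
  exact hj.trans (hmax (H j) (hH j))

theorem stmt_12 (n k m : ℕ) (hk : 0 < k) (hkn : k ≤ n) (hm : 0 < m)
    (f : (Fin n → ℝ) → ℝ) (hf : ConvexOn ℝ Set.univ f) :
    ∃ x : Finset (Fin n), x.card = k ∧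
      (∀ H : Fin m → Finset (Fin n), (∀ j, (H j).card = k) →
        f (fun i => ∑ j, if i ∈ H j then (1 : ℝ) else 0) ≤
          f (fun i => if i ∈ x then (m : ℝ) else 0)) ∧
      ∀ y : Finset (Fin n), y.card = k →
        f (fun i => if i ∈ y then (m : ℝ) else 0) ≤
          f (fun i => if i ∈ x then (m : ℝ) else 0) :=
  stmt_12_general n k m hkn hm f hf
end

section
/- Every vertex of the degree sequence polytope D(n,m,2) = conv{∑ G : G a simple graph on [n] with exactly m edges} is the degree sequence of a threshold graph with m edges. -/
/-- A graph (set of 2-element edge sets) is threshold iff `N(i) ⊆ N[j]` whenever `dᵢ ≤ dⱼ`. -/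
def IsThreshold {V : Type*} [DecidableEq V] (G : Finset (Finset V)) : Prop :=
  ∀ i j : V, degSeq G i ≤ degSeq G j →
    ∀ x : V, ({i, x} : Finset V) ∈ G → x = j ∨ ({j, x} : Finset V) ∈ G

open Finset

lemma eq_of_mem_extremePoints_of_add_eq_two_smul {E : Type*} [AddCommGroup E] [Module ℝ E]
    {A : Set E} {x u v : E} (hx : x ∈ Set.extremePoints ℝ A) (hu : u ∈ A) (hv : v ∈ A)
    (huv : u + v = (2 : ℝ) • x) : u = x :=
  hx.2 hu hv ⟨1 / 2, 1 / 2, by norm_num, by norm_num, by norm_num, by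
    rw [← smul_add, huv, smul_smul]; norm_num⟩

lemma card_insert_erase_of_notMem {α : Type*} [DecidableEq α] {s : Finset α} {a b : α}
    (ha : a ∉ s) (hb : b ∈ s) : (insert a (s.erase b)).card = s.card := by
  rw [card_insert_of_notMem fun h => ha (mem_of_mem_erase h), card_erase_add_one hb]

section Degree

variable {V : Type*} [DecidableEq V]

lemma degSeq_insert_erase_add {G : Finset (Finset V)} {a b : Finset V} (ha : a ∉ G) (hb : b ∈ G)
    (k : V) :
    degSeq (insert a (G.erase b)) k + (if k ∈ b then 1 else 0)
      = degSeq G k + (if k ∈ a then 1 else 0) := by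
  simp only [degSeq, card_filter]
  rw [sum_insert (fun h => ha (mem_of_mem_erase h)), add_assoc, sum_erase_add _ _ hb, add_comm]

lemma ite_mem_pair {a b : V} (hab : a ≠ b) (k : V) :
    (if k ∈ ({a, b} : Finset V) then 1 else 0 : ℕ)
      = (if k = a then 1 else 0) + (if k = b then 1 else 0) := by
  by_cases hka : k = a
  · subst hka; simp [hab]
  · simp [hka]

lemma degSeq_add_degSeq_of_switch {G : Finset (Finset V)} {i j x y : V}
    (hix : {i, x} ∈ G) (hjx : {j, x} ∉ G) (hjy : {j, y} ∈ G) (hiy : {i, y} ∉ G)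
    (hxi : x ≠ i) (hxj : x ≠ j) (hyi : y ≠ i) (hyj : y ≠ j) (k : V) :
    degSeq (insert {j, x} (G.erase {i, x})) k + degSeq (insert {i, y} (G.erase {j, y})) k
      = 2 * degSeq G k := by
  have h₁ := degSeq_insert_erase_add hjx hix k
  have h₂ := degSeq_insert_erase_add hiy hjy k
  rw [ite_mem_pair hxi.symm, ite_mem_pair hxj.symm] at h₁
  rw [ite_mem_pair hyj.symm, ite_mem_pair hyi.symm] at h₂
  omega

lemma ne_of_pair_mem {G : Finset (Finset V)} (hG : ∀ e ∈ G, e.card = 2) {a b : V}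
    (h : {a, b} ∈ G) : a ≠ b := by
  rintro rfl
  simpa using hG _ h

lemma forall_card_eq_two_insert_erase {G : Finset (Finset V)}
    (hG : ∀ e ∈ G, e.card = 2) {a b : Finset V} (ha : a.card = 2) :
    ∀ e ∈ insert a (G.erase b), e.card = 2 := by
  intro e he
  rcases mem_insert.1 he with rfl | he
  exacts [ha, hG e (mem_of_mem_erase he)]

end Degree

section Graph

variable {V : Type*} [DecidableEq V] [Fintype V]

def neighbors (G : Finset (Finset V)) (i : V) : Finset V :=
  univ.filter fun x => ({i, x} : Finset V) ∈ G

lemma mem_neighbors {G : Finset (Finset V)} {i x : V} : x ∈ neighbors G i ↔ {i, x} ∈ G := by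
  simp [neighbors]

lemma mem_neighbors_comm {G : Finset (Finset V)} {i x : V} :
    x ∈ neighbors G i ↔ i ∈ neighbors G x := by
  rw [mem_neighbors, mem_neighbors, pair_comm]

lemma degSeq_eq_card_neighbors {G : Finset (Finset V)} (hG : ∀ e ∈ G, e.card = 2) (i : V) :
    degSeq G i = (neighbors G i).card := by
  refine (card_bij (fun x _ => ({i, x} : Finset V)) ?_ ?_ ?_).symm
  · intro x hx
    simpa [degSeq] using mem_neighbors.1 hx
  · intro x hx y _ hxy
    have hxi : x ≠ i := by
      rintro rfl
      simpa using hG _ (mem_neighbors.1 hx)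
    have : x ∈ ({i, y} : Finset V) := hxy ▸ mem_insert_of_mem (mem_singleton_self x)
    simpa [hxi] using this
  · intro e he
    obtain ⟨heG, hie⟩ := mem_filter.1 he
    obtain ⟨a, b, -, rfl⟩ := card_eq_two.1 (hG _ heG)
    rcases mem_insert.1 hie with rfl | hib
    · exact ⟨b, mem_neighbors.2 heG, rfl⟩
    · rw [← mem_singleton.1 hib, pair_comm] at heG ⊢
      exact ⟨a, mem_neighbors.2 heG, rfl⟩

lemma exists_neighbor_not_neighbor_of_degSeq_le {G : Finset (Finset V)} (hG : ∀ e ∈ G, e.card = 2) {i j x : V}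
    (hij : degSeq G i ≤ degSeq G j) (hix : {i, x} ∈ G) (hxj : x ≠ j) (hjx : {j, x} ∉ G) :
    ∃ y, y ≠ i ∧ y ≠ j ∧ {j, y} ∈ G ∧ {i, y} ∉ G := by
  have hcard : ((neighbors G i).erase j).card ≤ ((neighbors G j).erase i).card := by
    rw [card_erase_eq_ite, card_erase_eq_ite, ← degSeq_eq_card_neighbors hG,
      ← degSeq_eq_card_neighbors hG]
    have hji : j ∈ neighbors G i ↔ i ∈ neighbors G j := mem_neighbors_comm
    split_ifs <;> first | omega | tauto
  by_contra! h
  have hsub : insert x ((neighbors G j).erase i) ⊆ (neighbors G i).erase j := by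
    refine insert_subset (mem_erase.2 ⟨hxj, mem_neighbors.2 hix⟩) fun y hy => ?_
    obtain ⟨hyi, hjy⟩ := mem_erase.1 hy
    have hyj := (ne_of_pair_mem hG (mem_neighbors.1 hjy)).symm
    exact mem_erase.2 ⟨hyj, mem_neighbors.2 (h y hyi hyj (mem_neighbors.1 hjy))⟩
  have hx : x ∉ (neighbors G j).erase i := fun hx => hjx (mem_neighbors.1 (mem_of_mem_erase hx))
  have := card_le_card hsub
  rw [card_insert_of_notMem hx] at this
  omega

end Graph

theorem stmt_14 (n m : ℕ) (d : Fin n → ℝ)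
    (hd : d ∈ Set.extremePoints ℝ (convexHull ℝ
      {v : Fin n → ℝ | ∃ G : Finset (Finset (Fin n)),
        (∀ e ∈ G, e.card = 2) ∧ G.card = m ∧ ∀ i, v i = (degSeq G i : ℝ)})) :
    ∃ G : Finset (Finset (Fin n)), (∀ e ∈ G, e.card = 2) ∧ G.card = m ∧
      IsThreshold G ∧ ∀ i, d i = (degSeq G i : ℝ) := by
  obtain ⟨G, hG, hm, hdG⟩ := extremePoints_convexHull_subset hd
  refine ⟨G, hG, hm, fun i j hij x hix => ?_, hdG⟩
  by_contra! ⟨hxj, hjx⟩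
  obtain ⟨y, hyi, hyj, hjy, hiy⟩ := exists_neighbor_not_neighbor_of_degSeq_le hG hij hix hxj hjx
  have hxi : x ≠ i := (ne_of_pair_mem hG hix).symm
  have hmid := eq_of_mem_extremePoints_of_add_eq_two_smul hd
    (subset_convexHull ℝ _ ⟨insert {j, x} (G.erase {i, x}),
      forall_card_eq_two_insert_erase hG (card_pair hxj.symm),
      (card_insert_erase_of_notMem hjx hix).trans hm, fun _ => rfl⟩)
    (subset_convexHull ℝ _ ⟨insert {i, y} (G.erase {j, y}),
      forall_card_eq_two_insert_erase hG (card_pair hyi.symm),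
      (card_insert_erase_of_notMem hiy hjy).trans hm, fun _ => rfl⟩) <| funext fun k => by
    simp only [Pi.add_apply, Pi.smul_apply, smul_eq_mul, hdG k]
    exact_mod_cast degSeq_add_degSeq_of_switch hix hjx hjy hiy hxi hxj hyi hyj k
  have hji : j ≠ i := fun h => hjx (h ▸ hix)
  have hdrop : degSeq (insert {j, x} (G.erase {i, x})) i + 1 = degSeq G i := by
    simpa [hji.symm, hxi.symm] using degSeq_insert_erase_add hjx hix i
  have hi := congrFun hmid i
  rw [hdG i, Nat.cast_inj] at hi
  omega
end

section
/- Let G be a simple graph on [n] with degree sequence d, let w ∈ ℝⁿ, and suppose i ≠ j with dᵢ ≤ dⱼ, wⱼ > wᵢ, and there exists k ∈ N(i)\N[j]. Then the graph G″ obtained from G by deleting edge {i,k} and adding edge {j,k} is a simple graph with the same number of edges and satisfies w·(∑G″) = w·(∑G) + wⱼ − wᵢ > w·(∑G). -/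
lemma degSum_eq {n : ℕ} (w : Fin n → ℝ) (G : Finset (Finset (Fin n))) :
    ∑ v, w v * (degSeq G v : ℝ) = ∑ e ∈ G, ∑ v ∈ e, w v := by
  unfold degSeq
  simp_rw [Finset.card_filter, Nat.cast_sum, Finset.mul_sum]
  rw [Finset.sum_comm]
  refine Finset.sum_congr rfl fun e _ => ?_
  rw [← Finset.sum_filter_add_sum_filter_not Finset.univ (· ∈ e)]
  have h1 : ∀ v ∈ Finset.univ.filter (· ∈ e), w v * ((if v ∈ e then 1 else 0 : ℕ) : ℝ) = w v := by
    intro v hv; simp at hv; simp [hv]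
  have h2 : ∀ v ∈ Finset.univ.filter (¬ · ∈ e), w v * ((if v ∈ e then 1 else 0 : ℕ) : ℝ) = 0 := by
    intro v hv; simp at hv; simp [hv]
  rw [Finset.sum_congr rfl h1, Finset.sum_congr rfl h2, Finset.sum_const_zero, add_zero]
  refine (Finset.sum_congr ?_ fun _ _ => rfl)
  ext v; simp

theorem stmt_18 (n : ℕ) (G : Finset (Finset (Fin n))) (hG : ∀ e ∈ G, e.card = 2)
    (w : Fin n → ℝ) (i j : Fin n) (hij : i ≠ j)
    (hdeg : degSeq G i ≤ degSeq G j) (hw : w i < w j)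
    (k : Fin n) (hk1 : ({i, k} : Finset (Fin n)) ∈ G) (hk2 : k ≠ j)
    (hk3 : ({j, k} : Finset (Fin n)) ∉ G) :
    (∀ e ∈ insert ({j, k} : Finset (Fin n)) (G.erase {i, k}), e.card = 2) ∧
    (insert ({j, k} : Finset (Fin n)) (G.erase {i, k})).card = G.card ∧
    (∑ v, w v * (degSeq (insert ({j, k} : Finset (Fin n)) (G.erase {i, k})) v : ℝ)) =
      (∑ v, w v * (degSeq G v : ℝ)) + w j - w i ∧
    (∑ v, w v * (degSeq G v : ℝ)) <
      ∑ v, w v * (degSeq (insert ({j, k} : Finset (Fin n)) (G.erase {i, k})) v : ℝ) := by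
  have hik : i ≠ k := by
    intro h; subst h
    have := hG _ hk1
    simp at this
  have hjk : ({j, k} : Finset (Fin n)).card = 2 := by
    rw [Finset.card_insert_of_notMem (by simp [Ne.symm hk2]), Finset.card_singleton]
  have hjknotin : ({j, k} : Finset (Fin n)) ∉ G.erase {i, k} :=
    fun h => hk3 (Finset.mem_of_mem_erase h)
  have hcard : (insert ({j, k} : Finset (Fin n)) (G.erase {i, k})).card = G.card := by
    rw [Finset.card_insert_of_notMem hjknotin, Finset.card_erase_of_mem hk1]
    have : 0 < G.card := Finset.card_pos.2 ⟨_, hk1⟩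
    omega
  have heq : (∑ v, w v * (degSeq (insert ({j, k} : Finset (Fin n)) (G.erase {i, k})) v : ℝ)) =
      (∑ v, w v * (degSeq G v : ℝ)) + w j - w i := by
    rw [degSum_eq, degSum_eq, Finset.sum_insert hjknotin,
      Finset.sum_erase_eq_sub hk1, Finset.sum_pair (Ne.symm hk2), Finset.sum_pair hik]
    ring
  refine ⟨?_, hcard, heq, by rw [heq]; linarith⟩
  intro e he
  rcases Finset.mem_insert.1 he with h | h
  · subst h; exact hjk
  · exact hG _ (Finset.mem_of_mem_erase h)
end
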